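/- Let L₁ and L₂ be distinct line segments in ℝ² of equal positive length that intersect at their common midpoint, and let (σ_N) be a sequence of positive reals with σ_N → 0. Then there exists a sequence of measurable estimators ẑ_N : (ℝ²)^N → {1,2}^N achieving almost exact recovery: when (z, X) is sampled from GLMM_N(L₁, L₂, σ_N), for every ε > 0 one has P(Ham*(ẑ_N(X), z)/N ≤ ε) → 1 as N → ∞. -/

import Mathlib

open MeasureTheory ProbabilityTheory Filter

noncomputable section

abbrev E2 := EuclideanSpace ℝ (Fin 2)

def stdGaussian2 : Measure E2 :=
  Measure.map (MeasurableEquiv.toLp 2 (Fin 2 → ℝ))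
    (Measure.pi fun _ : Fin 2 => gaussianReal 0 1)

def uniformSeg (a b : E2) : Measure E2 :=
  Measure.map (fun t : ℝ => a + t • (b - a)) (volume.restrict (Set.Icc (0:ℝ) 1))

def obsLaw (a b : E2) (σ : ℝ) : Measure E2 :=
  Measure.map (fun q : E2 × E2 => q.1 + σ • q.2) ((uniformSeg a b).prod stdGaussian2)

def labelLaw : Measure (Fin 2) := (PMF.uniformOfFintype (Fin 2)).toMeasure

def GLMM (N : ℕ) (a₁ b₁ a₂ b₂ : E2) (σ : ℝ) :
    Measure ((Fin N → Fin 2) × (Fin N → E2)) :=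
  (Measure.pi fun _ : Fin N => labelLaw).bind fun z =>
    Measure.map (fun x => (z, x))
      (Measure.pi fun i => if z i = 0 then obsLaw a₁ b₁ σ else obsLaw a₂ b₂ σ)

def hamStar {N : ℕ} (zhat z : Fin N → Fin 2) : ℕ :=
  min ((Finset.univ.filter fun i => zhat i ≠ z i).card)
      ((Finset.univ.filter fun i => zhat i ≠ Equiv.swap 0 1 (z i)).card)

-- auxiliary lemmas

lemma midpoint_eq' (a b : E2) : midpoint ℝ a b = a + (2⁻¹ : ℝ) • (b - a) := by
  rw [midpoint_eq_smul_add, invOf_eq_inv]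
  module

lemma seg_closed (a b : E2) : IsClosed (segment ℝ a b) := by
  rw [segment_eq_image']
  exact (isCompact_Icc.image (by continuity)).isClosed

instance : IsProbabilityMeasure stdGaussian2 := by
  rw [stdGaussian2]
  exact Measure.isProbabilityMeasure_map (MeasurableEquiv.measurable _).aemeasurable

lemma measurable_segParam (a b : E2) : Measurable (fun t : ℝ => a + t • (b - a)) :=
  (Continuous.measurable (by continuity))

instance (a b : E2) : IsProbabilityMeasure (uniformSeg a b) := by
  have : IsProbabilityMeasure (volume.restrict (Set.Icc (0:ℝ) 1)) :=
    ⟨by simp [Real.volume_Icc]⟩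
  rw [uniformSeg]
  exact Measure.isProbabilityMeasure_map (measurable_segParam a b).aemeasurable

lemma measurable_noiseMap (σ : ℝ) : Measurable (fun q : E2 × E2 => q.1 + σ • q.2) :=
  measurable_fst.add (measurable_snd.const_smul σ)

instance (a b : E2) (σ : ℝ) : IsProbabilityMeasure (obsLaw a b σ) := by
  rw [obsLaw]
  exact Measure.isProbabilityMeasure_map (measurable_noiseMap σ).aemeasurable

lemma key_indep (a₁ b₁ a₂ b₂ : E2)
    (hlen : ‖b₁ - a₁‖ = ‖b₂ - a₂‖) (hpos : 0 < ‖b₁ - a₁‖)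
    (hmid : midpoint ℝ a₁ b₁ = midpoint ℝ a₂ b₂)
    (hdist : segment ℝ a₁ b₁ ≠ segment ℝ a₂ b₂) :
    ∀ c : ℝ, b₂ - a₂ ≠ c • (b₁ - a₁) := by
  intro c hc
  have habs : |c| = 1 := by
    have h1 : ‖b₂ - a₂‖ = |c| * ‖b₁ - a₁‖ := by rw [hc, norm_smul, Real.norm_eq_abs]
    have h2 : (1 : ℝ) * ‖b₁ - a₁‖ = |c| * ‖b₁ - a₁‖ := by rw [one_mul, ← h1, hlen]
    exact (mul_right_cancel₀ (ne_of_gt hpos) h2).symm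
  have hsum : a₁ + b₁ = a₂ + b₂ := by
    have h := congrArg (fun x : E2 => (2:ℝ) • x) hmid
    simp only [midpoint_eq_smul_add, invOf_eq_inv, smul_smul] at h
    norm_num at h
    exact h
  rcases (abs_eq (by norm_num : (0:ℝ) ≤ 1)).mp habs with h1 | h1
  · subst h1
    rw [one_smul] at hc
    have ha : (2:ℝ) • a₂ = (2:ℝ) • a₁ := by
      linear_combination (norm := module) - hsum - hc
    have hb : (2:ℝ) • b₂ = (2:ℝ) • b₁ := by
      linear_combination (norm := module) - hsum + hc
    exact hdist (by rw [smul_right_injective E2 (two_ne_zero) ha,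
      smul_right_injective E2 (two_ne_zero) hb])
  · subst h1
    rw [neg_one_smul] at hc
    have ha : (2:ℝ) • a₂ = (2:ℝ) • b₁ := by
      linear_combination (norm := module) - hsum - hc
    have hb : (2:ℝ) • b₂ = (2:ℝ) • a₁ := by
      linear_combination (norm := module) - hsum + hc
    exact hdist (by rw [smul_right_injective E2 (two_ne_zero) ha,
      smul_right_injective E2 (two_ne_zero) hb, segment_symm])

lemma seg_inter (a₁ b₁ a₂ b₂ : E2)
    (hlen : ‖b₁ - a₁‖ = ‖b₂ - a₂‖) (hpos : 0 < ‖b₁ - a₁‖)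
    (hmid : midpoint ℝ a₁ b₁ = midpoint ℝ a₂ b₂)
    (hdist : segment ℝ a₁ b₁ ≠ segment ℝ a₂ b₂) :
    segment ℝ a₁ b₁ ∩ segment ℝ a₂ b₂ ⊆ {midpoint ℝ a₁ b₁} := by
  rintro x ⟨hx1, hx2⟩
  rw [segment_eq_image'] at hx1 hx2
  obtain ⟨s, hs, rfl⟩ := hx1
  obtain ⟨t, ht, hx⟩ := hx2
  have heq : a₁ + (2⁻¹:ℝ) • (b₁ - a₁) = a₂ + (2⁻¹:ℝ) • (b₂ - a₂) :=
    (midpoint_eq' a₁ b₁).symm.trans (hmid.trans (midpoint_eq' a₂ b₂))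
  have key : (t - 2⁻¹ : ℝ) • (b₂ - a₂) = (s - 2⁻¹ : ℝ) • (b₁ - a₁) := by
    linear_combination (norm := module) hx + heq
  by_cases htm : t = (2⁻¹ : ℝ)
  · subst htm
    rw [sub_self, zero_smul] at key
    have hw1 : b₁ - a₁ ≠ 0 := fun h => by simp [h] at hpos
    have hs2 : s - 2⁻¹ = 0 := by
      rcases smul_eq_zero.mp key.symm with h | h
      · exact h
      · exact absurd h hw1
    have : s = (2⁻¹ : ℝ) := by linarith [hs2, sub_eq_zero.mp hs2]
    subst this
    simp [Set.mem_singleton_iff, midpoint_eq']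
  · exfalso
    have h2 : b₂ - a₂ = ((t - 2⁻¹)⁻¹ * (s - 2⁻¹)) • (b₁ - a₁) := by
      rw [mul_smul, ← key, smul_smul, inv_mul_cancel₀ (sub_ne_zero.mpr htm), one_smul]
    exact key_indep a₁ b₁ a₂ b₂ hlen hpos hmid hdist _ h2
open scoped ENNReal NNReal
-- classifier
def clsfy (a₁ b₁ a₂ b₂ : E2) (x : E2) : Fin 2 :=
  if Metric.infDist x (segment ℝ a₁ b₁) < Metric.infDist x (segment ℝ a₂ b₂) then 0 else 1

lemma measurable_clsfy (a₁ b₁ a₂ b₂ : E2) : Measurable (clsfy a₁ b₁ a₂ b₂) := by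
  unfold clsfy
  exact Measurable.ite
    (measurableSet_lt (Metric.continuous_infDist_pt _).measurable
      (Metric.continuous_infDist_pt _).measurable)
    measurable_const measurable_const

/-- the key convergence lemma for one observation law -/
lemma tendsto_err (a b : E2) (hab : b ≠ a) (U : Set E2) (hU : IsOpen U)
    (hseg : ∀ u ∈ segment ℝ a b, u ≠ midpoint ℝ a b → u ∈ U)
    (σ : ℕ → ℝ) (hσ : Tendsto σ atTop (nhds 0)) :
    Tendsto (fun N => obsLaw a b (σ N) Uᶜ) atTop (nhds 0) := by
  set m := midpoint ℝ a b with hm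
  set μ := (uniformSeg a b).prod stdGaussian2 with hμdef
  have hUc : MeasurableSet Uᶜ := hU.isClosed_compl.measurableSet
  -- a.e. statement
  have hae : ∀ᵐ q : E2 × E2 ∂μ, q.1 ∈ segment ℝ a b ∧ q.1 ≠ m := by
    rw [ae_iff]
    have hset : {q : E2 × E2 | ¬(q.1 ∈ segment ℝ a b ∧ q.1 ≠ m)}
        = Prod.fst ⁻¹' (segment ℝ a b \ {m})ᶜ := by
      ext q
      simp [Set.mem_diff, not_and, and_comm, Classical.not_not, imp_iff_not_or, or_comm]
    rw [hset, ← Set.prod_univ, hμdef, Measure.prod_prod]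
    have h0 : uniformSeg a b (segment ℝ a b \ {m})ᶜ = 0 := by
      have hCm : MeasurableSet (segment ℝ a b \ {m})ᶜ :=
        ((seg_closed a b).measurableSet.diff (measurableSet_singleton m)).compl
      rw [uniformSeg, Measure.map_apply (measurable_segParam a b) hCm,
        Measure.restrict_apply ((measurable_segParam a b) hCm)]
      have hsub : (fun t : ℝ => a + t • (b - a)) ⁻¹' (segment ℝ a b \ {m})ᶜ ∩ Set.Icc 0 1
          ⊆ {(2⁻¹ : ℝ)} := by
        rintro t ⟨htC, htI⟩
        have hseg' : a + t • (b - a) ∈ segment ℝ a b := by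
          rw [segment_eq_image']; exact ⟨t, htI, rfl⟩
        have hmeq : a + t • (b - a) = m := by
          by_contra hne
          exact htC ⟨hseg', hne⟩
        rw [hm, midpoint_eq'] at hmeq
        have hw : b - a ≠ 0 := sub_ne_zero.mpr hab
        exact smul_left_injective ℝ hw (add_left_cancel hmeq)
      exact measure_mono_null hsub (by simp)
    rw [h0, zero_mul]
  -- rewrite as integrals of indicators
  set G : ℕ → E2 × E2 → ℝ≥0∞ := fun N =>
    Set.indicator ((fun q : E2 × E2 => q.1 + σ N • q.2) ⁻¹' Uᶜ) 1
    with hG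
  have hrw : ∀ N, obsLaw a b (σ N) Uᶜ = ∫⁻ q, G N q ∂μ := by
    intro N
    rw [obsLaw, Measure.map_apply (measurable_noiseMap (σ N)) hUc]
    exact (lintegral_indicator_one ((measurable_noiseMap (σ N)) hUc)).symm
  have hlim : ∀ᵐ q ∂μ, Tendsto (fun N => G N q) atTop (nhds ((fun _ : E2 × E2 => (0:ℝ≥0∞)) q)) := by
    filter_upwards [hae] with q hq
    have hu : q.1 ∈ U := hseg q.1 hq.1 hq.2
    have htend : Tendsto (fun N => q.1 + σ N • q.2) atTop (nhds q.1) := by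
      have h1 := (hσ.smul_const q.2).const_add q.1
      simpa using h1
    have hev : ∀ᶠ N in atTop, q.1 + σ N • q.2 ∈ U := htend (hU.mem_nhds hu)
    apply Filter.Tendsto.congr' _ tendsto_const_nhds
    filter_upwards [hev] with N hN
    exact (Set.indicator_of_notMem (by simpa using hN) _).symm
  have hconv := tendsto_lintegral_of_dominated_convergence (μ := μ) (fun _ => (1:ℝ≥0∞))
    (fun N => measurable_const.indicator ((measurable_noiseMap (σ N)) hUc))
    (fun N => Filter.Eventually.of_forall (fun q => Set.indicator_le_self' (by simp) q))
    (by simp) hlim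
  simp only [lintegral_zero] at hconv
  exact (tendsto_congr hrw).mpr hconv
instance : IsProbabilityMeasure labelLaw := by
  rw [labelLaw]; infer_instance

instance (N : ℕ) (a₁ b₁ a₂ b₂ : E2) (σ : ℝ) (z : Fin N → Fin 2) (i : Fin N) :
    IsProbabilityMeasure (if z i = 0 then obsLaw a₁ b₁ σ else obsLaw a₂ b₂ σ) := by
  split <;> infer_instance

instance glmm_prob (N : ℕ) (a₁ b₁ a₂ b₂ : E2) (σ : ℝ) :
    IsProbabilityMeasure (GLMM N a₁ b₁ a₂ b₂ σ) := by
  constructor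
  rw [GLMM, Measure.bind_apply MeasurableSet.univ (measurable_of_finite _).aemeasurable]
  have h1 : ∀ z : Fin N → Fin 2,
      (Measure.map (fun x => (z, x))
        (Measure.pi fun i => if z i = 0 then obsLaw a₁ b₁ σ else obsLaw a₂ b₂ σ))
        Set.univ = 1 := by
    intro z
    rw [Measure.map_apply measurable_prodMk_left MeasurableSet.univ]
    simp
  simp only [h1]
  simp

lemma pi_eval_apply {N : ℕ} (μs : Fin N → Measure E2) [∀ i, IsProbabilityMeasure (μs i)]
    (i : Fin N) (A : Set E2) :
    Measure.pi μs (Function.eval i ⁻¹' A) = μs i A := by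
  classical
  rw [← Set.univ_pi_update_univ, Measure.pi_pi]
  rw [Finset.prod_eq_single i (fun j _ hj => by
        rw [Function.update_of_ne hj]; exact measure_univ)
      (fun h => absurd (Finset.mem_univ i) h)]
  rw [Function.update_self]

lemma fin2_eq_one {c : Fin 2} (h : c ≠ 0) : c = 1 := by
  fin_cases c
  · exact absurd rfl h
  · rfl
lemma clsfy_ne_zero_mem {a₁ b₁ a₂ b₂ : E2} {x : E2} (h : clsfy a₁ b₁ a₂ b₂ x ≠ 0) :
    ¬ Metric.infDist x (segment ℝ a₁ b₁) < Metric.infDist x (segment ℝ a₂ b₂) :=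
  fun hlt => h (if_pos hlt)

lemma clsfy_ne_one_mem {a₁ b₁ a₂ b₂ : E2} {x : E2} (h : clsfy a₁ b₁ a₂ b₂ x ≠ 1) :
    ¬ Metric.infDist x (segment ℝ a₂ b₂) < Metric.infDist x (segment ℝ a₁ b₁) := by
  have hlt : Metric.infDist x (segment ℝ a₁ b₁) < Metric.infDist x (segment ℝ a₂ b₂) := by
    by_contra hge
    exact h (if_neg hge)
  exact fun h2 => absurd (lt_trans hlt h2) (lt_irrefl _)

set_option maxHeartbeats 1000000 in
/-- almost exact recovery is possible when σ_N → 0. -/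
theorem almost_exact_recovery_possible
    (a₁ b₁ a₂ b₂ : E2)
    (hlen : ‖b₁ - a₁‖ = ‖b₂ - a₂‖) (hpos : 0 < ‖b₁ - a₁‖)
    (hmid : midpoint ℝ a₁ b₁ = midpoint ℝ a₂ b₂)
    (hdist : segment ℝ a₁ b₁ ≠ segment ℝ a₂ b₂)
    (σ : ℕ → ℝ) (hσpos : ∀ N, 0 < σ N)
    (hσ : Tendsto σ atTop (nhds 0)) :
    ∃ zhat : (N : ℕ) → (Fin N → E2) → (Fin N → Fin 2),
      (∀ N, Measurable (zhat N)) ∧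
      ∀ ε : ℝ, 0 < ε →
        Tendsto
          (fun N : ℕ => GLMM N a₁ b₁ a₂ b₂ (σ N)
            {p | (hamStar (zhat N p.2) p.1 : ℝ) / N ≤ ε})
          atTop (nhds 1) := by
  classical
  have hab1 : b₁ ≠ a₁ := fun h => by simp [h] at hpos
  have hpos2 : 0 < ‖b₂ - a₂‖ := hlen ▸ hpos
  have hab2 : b₂ ≠ a₂ := fun h => by simp [h] at hpos2
  set U₁ : Set E2 :=
    {x | Metric.infDist x (segment ℝ a₁ b₁) < Metric.infDist x (segment ℝ a₂ b₂)} with hU₁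
  set U₂ : Set E2 :=
    {x | Metric.infDist x (segment ℝ a₂ b₂) < Metric.infDist x (segment ℝ a₁ b₁)} with hU₂
  have hU₁open : IsOpen U₁ :=
    isOpen_lt (Metric.continuous_infDist_pt _) (Metric.continuous_infDist_pt _)
  have hU₂open : IsOpen U₂ :=
    isOpen_lt (Metric.continuous_infDist_pt _) (Metric.continuous_infDist_pt _)
  have hinter := seg_inter a₁ b₁ a₂ b₂ hlen hpos hmid hdist
  have hseg1 : ∀ u ∈ segment ℝ a₁ b₁, u ≠ midpoint ℝ a₁ b₁ → u ∈ U₁ := by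
    intro u hu hne
    have h0 : Metric.infDist u (segment ℝ a₁ b₁) = 0 := Metric.infDist_zero_of_mem hu
    have hnot : u ∉ segment ℝ a₂ b₂ := fun h2 => hne (hinter ⟨hu, h2⟩)
    have hposd : 0 < Metric.infDist u (segment ℝ a₂ b₂) :=
      ((seg_closed a₂ b₂).notMem_iff_infDist_pos ⟨a₂, left_mem_segment ℝ a₂ b₂⟩).mp hnot
    simp only [hU₁, Set.mem_setOf_eq, h0]
    exact hposd
  have hseg2 : ∀ u ∈ segment ℝ a₂ b₂, u ≠ midpoint ℝ a₂ b₂ → u ∈ U₂ := by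
    intro u hu hne
    have h0 : Metric.infDist u (segment ℝ a₂ b₂) = 0 := Metric.infDist_zero_of_mem hu
    have hnot : u ∉ segment ℝ a₁ b₁ := fun h2 => hne (hmid ▸ hinter ⟨h2, hu⟩)
    have hposd : 0 < Metric.infDist u (segment ℝ a₁ b₁) :=
      ((seg_closed a₁ b₁).notMem_iff_infDist_pos ⟨a₁, left_mem_segment ℝ a₁ b₁⟩).mp hnot
    simp only [hU₂, Set.mem_setOf_eq, h0]
    exact hposd
  set q : ℕ → ℝ≥0∞ := fun N => obsLaw a₁ b₁ (σ N) U₁ᶜ + obsLaw a₂ b₂ (σ N) U₂ᶜ with hqdef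
  have hq0 : Tendsto q atTop (nhds 0) := by
    have h1 := tendsto_err a₁ b₁ hab1 U₁ hU₁open hseg1 σ hσ
    have h2 := tendsto_err a₂ b₂ hab2 U₂ hU₂open hseg2 σ hσ
    simpa using h1.add h2
  -- per-point error bound
  have hpoint : ∀ (N : ℕ) (c : Fin 2),
      (if c = 0 then obsLaw a₁ b₁ (σ N) else obsLaw a₂ b₂ (σ N))
        {y | clsfy a₁ b₁ a₂ b₂ y ≠ c} ≤ q N := by
    intro N c
    by_cases hc : c = 0
    · subst hc
      rw [if_pos rfl]
      have hsub : {y | clsfy a₁ b₁ a₂ b₂ y ≠ 0} ⊆ U₁ᶜ := by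
        intro y hy
        simp only [Set.mem_compl_iff, hU₁, Set.mem_setOf_eq]
        exact clsfy_ne_zero_mem hy
      exact le_trans (measure_mono hsub) (self_le_add_right _ _)
    · have hc1 : c = 1 := fin2_eq_one hc
      subst hc1
      rw [if_neg (by simp)]
      have hsub : {y | clsfy a₁ b₁ a₂ b₂ y ≠ 1} ⊆ U₂ᶜ := by
        intro y hy
        simp only [Set.mem_compl_iff, hU₂, Set.mem_setOf_eq]
        exact clsfy_ne_one_mem hy
      exact le_trans (measure_mono hsub) (self_le_add_left _ _)
  set zh : (N : ℕ) → (Fin N → E2) → (Fin N → Fin 2) :=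
    fun N x i => clsfy a₁ b₁ a₂ b₂ (x i) with hzh
  have hzhmeas : ∀ N, Measurable (zh N) := fun N =>
    measurable_pi_lambda _ (fun i => (measurable_clsfy a₁ b₁ a₂ b₂).comp (measurable_pi_apply i))
  refine ⟨zh, hzhmeas, ?_⟩
  intro ε hε
  set Gd : (N : ℕ) → Set ((Fin N → Fin 2) × (Fin N → E2)) :=
    fun N => {p | (hamStar (zh N p.2) p.1 : ℝ) / N ≤ ε} with hGd
  have hGmeas : ∀ N, MeasurableSet (Gd N) := by
    intro N
    have hF : Measurable (fun p : (Fin N → Fin 2) × (Fin N → E2) => hamStar (zh N p.2) p.1) :=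
      (measurable_of_finite (fun c : (Fin N → Fin 2) × (Fin N → Fin 2) => hamStar c.1 c.2)).comp
        (((hzhmeas N).comp measurable_snd).prodMk measurable_fst)
    exact measurableSet_le (((measurable_of_countable _).comp hF).div_const _) measurable_const
  -- main bound
  have hbound : ∀ N, 1 ≤ N → GLMM N a₁ b₁ a₂ b₂ (σ N) (Gd N)ᶜ ≤ q N / ENNReal.ofReal ε := by
    intro N hN1
    have hN0 : ((N : ℝ≥0∞)) ≠ 0 := by
      simp only [ne_eq, Nat.cast_eq_zero]; omega
    have hNR : (0:ℝ) < (N:ℝ) := by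
      have : (1:ℝ) ≤ (N:ℝ) := by exact_mod_cast hN1
      linarith
    rw [GLMM, Measure.bind_apply (hGmeas N).compl (measurable_of_finite _).aemeasurable]
    have hper : ∀ z : Fin N → Fin 2,
        (Measure.map (fun x => (z, x))
          (Measure.pi fun i => if z i = 0 then obsLaw a₁ b₁ (σ N) else obsLaw a₂ b₂ (σ N)))
          (Gd N)ᶜ ≤ q N / ENNReal.ofReal ε := by
      intro z
      rw [Measure.map_apply measurable_prodMk_left (hGmeas N).compl]
      set μz := Measure.pi fun i => if z i = 0 then obsLaw a₁ b₁ (σ N) else obsLaw a₂ b₂ (σ N)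
        with hμz
      set f : (Fin N → E2) → ℝ≥0∞ :=
        fun x => ∑ i, if zh N x i ≠ z i then (1:ℝ≥0∞) else 0 with hf
      have hfim : ∀ i : Fin N, Measurable
          (fun x : Fin N → E2 => if zh N x i ≠ z i then (1:ℝ≥0∞) else 0) := by
        intro i
        apply Measurable.ite _ measurable_const measurable_const
        exact ((measurable_clsfy a₁ b₁ a₂ b₂).comp (measurable_pi_apply i))
          ((measurableSet_singleton (z i)).compl)
      have hfmeas : Measurable f := Finset.measurable_sum _ (fun i _ => hfim i)
      have hsub : (fun x => (z, x)) ⁻¹' (Gd N)ᶜ ⊆ {x | ENNReal.ofReal (ε * N) ≤ f x} := by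
        intro x hx
        simp only [Set.mem_preimage, Set.mem_compl_iff, hGd, Set.mem_setOf_eq, not_le] at hx
        have h1 : ε * N < (hamStar (zh N x) z : ℝ) := (lt_div_iff₀ hNR).mp hx
        have h2 : hamStar (zh N x) z ≤ (Finset.univ.filter fun i => zh N x i ≠ z i).card :=
          min_le_left _ _
        have h3 : ε * N < (((Finset.univ.filter fun i => zh N x i ≠ z i).card : ℕ) : ℝ) :=
          lt_of_lt_of_le h1 (by exact_mod_cast h2)
        have hcard : (((Finset.univ.filter fun i => zh N x i ≠ z i).card : ℕ) : ℝ≥0∞) = f x := by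
          rw [Finset.card_filter, hf]
          push_cast
          rfl
        simp only [Set.mem_setOf_eq, ← hcard, ← ENNReal.ofReal_natCast]
        exact ENNReal.ofReal_le_ofReal h3.le
      have hmarkov : μz {x | ENNReal.ofReal (ε * N) ≤ f x}
          ≤ (∫⁻ x, f x ∂μz) / ENNReal.ofReal (ε * N) :=
        meas_ge_le_lintegral_div hfmeas.aemeasurable
          (by simp [ENNReal.ofReal_eq_zero, not_le]; positivity)
          ENNReal.ofReal_ne_top
      have hint : (∫⁻ x, f x ∂μz) ≤ (N : ℝ≥0∞) * q N := by
        rw [hf]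
        rw [lintegral_finset_sum _ (fun i _ => hfim i)]
        have hterm : ∀ i : Fin N,
            (∫⁻ x, (if zh N x i ≠ z i then (1:ℝ≥0∞) else 0) ∂μz) ≤ q N := by
          intro i
          have hind : (fun x : Fin N → E2 => if zh N x i ≠ z i then (1:ℝ≥0∞) else 0)
              = Set.indicator (Function.eval i ⁻¹' {y | clsfy a₁ b₁ a₂ b₂ y ≠ z i}) 1 := by
            funext x
            simp [Set.indicator_apply, hzh]
          have hAmeas : MeasurableSet {y : E2 | clsfy a₁ b₁ a₂ b₂ y ≠ z i} :=
            (measurable_clsfy a₁ b₁ a₂ b₂) ((measurableSet_singleton (z i)).compl)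
          rw [hind, lintegral_indicator_one (hAmeas.preimage (measurable_pi_apply i)), hμz,
            pi_eval_apply]
          exact hpoint N (z i)
        calc ∑ i, ∫⁻ x, (if zh N x i ≠ z i then (1:ℝ≥0∞) else 0) ∂μz
            ≤ ∑ _i : Fin N, q N := Finset.sum_le_sum (fun i _ => hterm i)
          _ = (N : ℝ≥0∞) * q N := by simp [Finset.sum_const, nsmul_eq_mul]
      calc μz ((fun x => (z, x)) ⁻¹' (Gd N)ᶜ)
          ≤ μz {x | ENNReal.ofReal (ε * N) ≤ f x} := measure_mono hsub
        _ ≤ (∫⁻ x, f x ∂μz) / ENNReal.ofReal (ε * N) := hmarkov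
        _ ≤ ((N : ℝ≥0∞) * q N) / ENNReal.ofReal (ε * N) := ENNReal.div_le_div_right hint _
        _ = q N / ENNReal.ofReal ε := by
            rw [ENNReal.ofReal_mul hε.le, ENNReal.ofReal_natCast, mul_comm (N : ℝ≥0∞) (q N),
              ENNReal.mul_div_mul_right _ _ hN0 (ENNReal.natCast_ne_top N)]
    calc (∫⁻ z, (Measure.map (fun x => (z, x))
            (Measure.pi fun i => if z i = 0 then obsLaw a₁ b₁ (σ N) else obsLaw a₂ b₂ (σ N)))
            (Gd N)ᶜ ∂(Measure.pi fun _ : Fin N => labelLaw))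
        ≤ ∫⁻ _z, q N / ENNReal.ofReal ε ∂(Measure.pi fun _ : Fin N => labelLaw) :=
          lintegral_mono hper
      _ = q N / ENNReal.ofReal ε := by
          rw [lintegral_const, measure_univ, mul_one]
  have hofε : ENNReal.ofReal ε ≠ 0 := ne_of_gt (ENNReal.ofReal_pos.mpr hε)
  have hq' : Tendsto (fun N => q N / ENNReal.ofReal ε) atTop (nhds 0) := by
    simp only [div_eq_mul_inv]
    have := ENNReal.Tendsto.mul_const hq0 (Or.inr (ENNReal.inv_ne_top.mpr hofε))
    simpa using this
  have hbad : Tendsto (fun N => GLMM N a₁ b₁ a₂ b₂ (σ N) (Gd N)ᶜ) atTop (nhds 0) :=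
    tendsto_of_tendsto_of_tendsto_of_le_of_le' tendsto_const_nhds hq'
      (Filter.Eventually.of_forall fun N => zero_le)
      (eventually_atTop.mpr ⟨1, hbound⟩)
  have heq : ∀ N, GLMM N a₁ b₁ a₂ b₂ (σ N) (Gd N)
      = 1 - GLMM N a₁ b₁ a₂ b₂ (σ N) (Gd N)ᶜ := by
    intro N
    conv_lhs => rw [← compl_compl (Gd N)]
    exact prob_compl_eq_one_sub (hGmeas N).compl
  refine (tendsto_congr heq).mpr ?_
  have := ENNReal.Tendsto.sub (tendsto_const_nhds (x := (1:ℝ≥0∞))) hbad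
    (Or.inl ENNReal.one_ne_top)
  simpa using this
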